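/- arXiv:math/0305302 — 3 statements merged into one kernel-verified Lean document; each statement's English description precedes it below -/
import Mathlib

section
/- Let k be a field of characteristic different from 2 and let a, b, c ∈ k be nonzero. Then there is an isomorphism of k-algebras ℍ[k, a, b] ⊗[k] ℍ[k, a, c] ≅ Matrix (Fin 2) (Fin 2) ℍ[k, a, b·c]. -/
open scoped Quaternion TensorProduct

/-!
Inside `ℍ(a, b) ⊗ ℍ(a, c)` the pair `i ⊗ 1, j ⊗ j` satisfies the relations of `ℍ(a, bc)`, the pair
`i ⊗ i, 1 ⊗ j` those of `ℍ(a², c)`, and the two pairs commute. The resulting algebra map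
`ℍ(a, bc) ⊗ ℍ(a², c) → ℍ(a, b) ⊗ ℍ(a, c)` reaches the generators `i ⊗ 1, j ⊗ 1, 1 ⊗ i, 1 ⊗ j`
because `a` and `c` are invertible, so it is onto, hence bijective as both sides have dimension 16.
Finally `ℍ(a², c) ≅ M₂(k)` via `i ↦ diag(a, -a)`, `j ↦ [[0, 1], [c, 0]]`, and
`ℍ(a, bc) ⊗ M₂(k) ≅ M₂(ℍ(a, bc))`.
-/

noncomputable def AlgEquiv.ofSurjectiveOfFinrankEq {K A B : Type*} [Field K] [Ring A] [Ring B]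
    [Algebra K A] [Algebra K B] [FiniteDimensional K A] [FiniteDimensional K B]
    (f : A →ₐ[K] B) (hf : Function.Surjective f) (h : Module.finrank K A = Module.finrank K B) :
    A ≃ₐ[K] B :=
  AlgEquiv.ofBijective f
    ⟨(LinearMap.injective_iff_surjective_of_finrank_eq_finrank h (f := f.toLinearMap)).2 hf, hf⟩

theorem Algebra.TensorProduct.range_includeLeft_sup_range_includeRight {R A B : Type*}
    [CommSemiring R] [Semiring A] [Semiring B] [Algebra R A] [Algebra R B] :
    (includeLeft : A →ₐ[R] A ⊗[R] B).range ⊔ (includeRight : B →ₐ[R] A ⊗[R] B).range = ⊤ := by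
  simpa using (map_range (AlgHom.id R A) (AlgHom.id R B)).symm

namespace QuaternionAlgebra

section Generators

variable {R A : Type*} [CommRing R] [Ring A] [Algebra R A] {c₁ c₂ c₃ : R}

theorem Basis.commute_liftHom (q : Basis A c₁ c₂ c₃) {u : A} (hi : Commute q.i u)
    (hj : Commute q.j u) (x : ℍ[R,c₁,c₂,c₃]) : Commute (q.liftHom x) u := by
  have hk : Commute q.k u := q.i_mul_j ▸ hi.mul_left hj
  exact (((Algebra.commute_algebraMap_left _ _).add_left (hi.smul_left _)).add_left
    (hj.smul_left _)).add_left (hk.smul_left _)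

theorem range_le_of_i_mem_of_j_mem {f : ℍ[R,c₁,c₂,c₃] →ₐ[R] A} {S : Subalgebra R A}
    (hi : f (Basis.self R).i ∈ S) (hj : f (Basis.self R).j ∈ S) : f.range ≤ S := by
  rw [← lift.apply_symm_apply f, lift_apply, Basis.range_liftHom, Algebra.adjoin_le_iff]
  rintro x (rfl | rfl | rfl)
  · exact hi
  · exact hj
  · exact (lift.symm f).i_mul_j ▸ mul_mem hi hj

@[simp]
theorem Basis.liftHom_self_i (q : Basis A c₁ c₂ c₃) : q.liftHom (Basis.self R).i = q.i :=
  congrArg Basis.i (QuaternionAlgebra.lift.symm_apply_apply q)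

@[simp]
theorem Basis.liftHom_self_j (q : Basis A c₁ c₂ c₃) : q.liftHom (Basis.self R).j = q.j :=
  congrArg Basis.j (QuaternionAlgebra.lift.symm_apply_apply q)

end Generators

section Split

open Matrix

def basisMatrixOfSq (R : Type*) [CommRing R] (a c : R) :
    Basis (Matrix (Fin 2) (Fin 2) R) (a * a) 0 c where
  i := !![a, 0; 0, -a]
  j := !![0, 1; c, 0]
  k := !![0, a; -(a * c), 0]
  i_mul_i := by ext i j; fin_cases i <;> fin_cases j <;> simp [one_apply]
  j_mul_j := by ext i j; fin_cases i <;> fin_cases j <;> simp [one_apply]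
  i_mul_j := by ext i j; fin_cases i <;> fin_cases j <;> simp
  j_mul_i := by ext i j; fin_cases i <;> fin_cases j <;> simp [mul_comm]

variable {k : Type*} [Field k]

theorem surjective_liftHom_basisMatrixOfSq (hchar : (2 : k) ≠ 0) {a c : k} (ha : a ≠ 0)
    (hc : c ≠ 0) : Function.Surjective (basisMatrixOfSq k a c).liftHom := fun m =>
  ⟨⟨(m 0 0 + m 1 1) / 2, (m 0 0 - m 1 1) / (2 * a), (m 0 1 + m 1 0 / c) / 2,
      (m 0 1 - m 1 0 / c) / (2 * a)⟩, by
    ext i j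
    fin_cases i <;> fin_cases j <;>
      simp [basisMatrixOfSq, Basis.lift, algebraMap_matrix_apply] <;> field_simp <;> ring⟩

noncomputable def equivMatrixOfSq (hchar : (2 : k) ≠ 0) {a c : k} (ha : a ≠ 0) (hc : c ≠ 0) :
    ℍ[k, a * a, c] ≃ₐ[k] Matrix (Fin 2) (Fin 2) k :=
  AlgEquiv.ofSurjectiveOfFinrankEq _ (surjective_liftHom_basisMatrixOfSq hchar ha hc)
    (by simp [finrank_eq_four, Module.finrank_matrix])

end Split

section Tensor

open Algebra.TensorProduct

variable {R : Type*} [CommRing R] (a b c : R)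

@[simps i j]
def tensorBasisMul : Basis (ℍ[R, a, b] ⊗[R] ℍ[R, a, c]) a 0 (b * c) where
  i := (Basis.self R).i ⊗ₜ 1
  j := (Basis.self R).j ⊗ₜ (Basis.self R).j
  k := (Basis.self R).k ⊗ₜ (Basis.self R).j
  i_mul_i := by
    simp only [tmul_mul_tmul, Basis.i_mul_i, mul_one, zero_smul, add_zero,
      TensorProduct.smul_tmul, TensorProduct.tmul_smul, one_def]
  j_mul_j := by
    simp only [tmul_mul_tmul, Basis.j_mul_j, TensorProduct.smul_tmul, TensorProduct.tmul_smul,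
      smul_smul, mul_comm c b, one_def]
  i_mul_j := by simp only [tmul_mul_tmul, Basis.i_mul_j, one_mul]
  j_mul_i := by
    simp only [tmul_mul_tmul, Basis.j_mul_i, mul_one, zero_smul, zero_sub, TensorProduct.neg_tmul]

@[simps i j]
def tensorBasisSq : Basis (ℍ[R, a, b] ⊗[R] ℍ[R, a, c]) (a * a) 0 c where
  i := (Basis.self R).i ⊗ₜ (Basis.self R).i
  j := 1 ⊗ₜ (Basis.self R).j
  k := (Basis.self R).i ⊗ₜ (Basis.self R).k
  i_mul_i := by
    simp only [tmul_mul_tmul, Basis.i_mul_i, zero_smul, add_zero, TensorProduct.smul_tmul,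
      TensorProduct.tmul_smul, smul_smul, one_def]
  j_mul_j := by simp only [tmul_mul_tmul, Basis.j_mul_j, one_mul, TensorProduct.tmul_smul, one_def]
  i_mul_j := by simp only [tmul_mul_tmul, Basis.i_mul_j, mul_one]
  j_mul_i := by
    simp only [tmul_mul_tmul, Basis.j_mul_i, one_mul, zero_smul, zero_sub, TensorProduct.tmul_neg]

theorem commute_liftHom_tensorBasisMul_liftHom_tensorBasisSq (x : ℍ[R, a, b * c])
    (y : ℍ[R, a * a, c]) :
    Commute ((tensorBasisMul a b c).liftHom x) ((tensorBasisSq a b c).liftHom y) := by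
  have hii : Commute (tensorBasisSq a b c).i (tensorBasisMul a b c).i := by
    simp only [Commute, SemiconjBy, i_tensorBasisMul, i_tensorBasisSq, tmul_mul_tmul, mul_one,
      one_mul]
  have hji : Commute (tensorBasisSq a b c).j (tensorBasisMul a b c).i := by
    simp only [Commute, SemiconjBy, i_tensorBasisMul, j_tensorBasisSq, tmul_mul_tmul, mul_one,
      one_mul]
  have hij : Commute (tensorBasisSq a b c).i (tensorBasisMul a b c).j := by
    simp only [Commute, SemiconjBy, j_tensorBasisMul, i_tensorBasisSq, tmul_mul_tmul,
      Basis.i_mul_j, Basis.j_mul_i, zero_smul, zero_sub, TensorProduct.neg_tmul,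
      TensorProduct.tmul_neg, neg_neg]
  have hjj : Commute (tensorBasisSq a b c).j (tensorBasisMul a b c).j := by
    simp only [Commute, SemiconjBy, j_tensorBasisMul, j_tensorBasisSq, tmul_mul_tmul, mul_one,
      one_mul]
  exact Basis.commute_liftHom _ (Basis.commute_liftHom _ hii hji y).symm
    (Basis.commute_liftHom _ hij hjj y).symm x

def tensorHom : ℍ[R, a, b * c] ⊗[R] ℍ[R, a * a, c] →ₐ[R] ℍ[R, a, b] ⊗[R] ℍ[R, a, c] :=
  Algebra.TensorProduct.lift (tensorBasisMul a b c).liftHom (tensorBasisSq a b c).liftHom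
    (commute_liftHom_tensorBasisMul_liftHom_tensorBasisSq a b c)

variable {k : Type*} [Field k]

theorem surjective_tensorHom {a c : k} (b : k) (ha : a ≠ 0) (hc : c ≠ 0) :
    Function.Surjective (tensorHom a b c) := by
  set S := (tensorHom a b c).range
  have mem (x y) : (tensorBasisMul a b c).liftHom x * (tensorBasisSq a b c).liftHom y ∈ S :=
    (tensorHom a b c).mem_range_self (x ⊗ₜ y)
  have hi₁ : (Basis.self k).i ⊗ₜ (1 : ℍ[k, a, c]) ∈ S := by
    simpa only [Basis.liftHom_self_i, i_tensorBasisMul, map_one, mul_one] using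
      mem (Basis.self k).i 1
  have hj₂ : (1 : ℍ[k, a, b]) ⊗ₜ (Basis.self k).j ∈ S := by
    simpa only [Basis.liftHom_self_j, j_tensorBasisSq, map_one, one_mul] using
      mem 1 (Basis.self k).j
  -- `1 ⊗ i = a⁻¹ • (i ⊗ 1) * (i ⊗ i)` and `j ⊗ 1 = c⁻¹ • (j ⊗ j) * (1 ⊗ j)`
  have hi₂ : (1 : ℍ[k, a, b]) ⊗ₜ (Basis.self k).i ∈ S := by
    have h := S.smul_mem (mem (Basis.self k).i (Basis.self k).i) a⁻¹
    rwa [Basis.liftHom_self_i, Basis.liftHom_self_i, i_tensorBasisMul, i_tensorBasisSq,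
      tmul_mul_tmul, Basis.i_mul_i, one_mul, zero_smul, add_zero, ← TensorProduct.smul_tmul',
      smul_smul, inv_mul_cancel₀ ha, one_smul] at h
  have hj₁ : (Basis.self k).j ⊗ₜ (1 : ℍ[k, a, c]) ∈ S := by
    have h := S.smul_mem (mem (Basis.self k).j (Basis.self k).j) c⁻¹
    rwa [Basis.liftHom_self_j, Basis.liftHom_self_j, j_tensorBasisMul, j_tensorBasisSq,
      tmul_mul_tmul, Basis.j_mul_j, mul_one, TensorProduct.tmul_smul, smul_smul,
      inv_mul_cancel₀ hc, one_smul] at h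
  rw [← AlgHom.range_eq_top, eq_top_iff, ← range_includeLeft_sup_range_includeRight]
  refine sup_le (range_le_of_i_mem_of_j_mem ?_ ?_)
    (range_le_of_i_mem_of_j_mem ?_ ?_)
  exacts [hi₁, hj₁, hi₂, hj₂]

noncomputable def tensorEquiv {a c : k} (b : k) (ha : a ≠ 0) (hc : c ≠ 0) :
    ℍ[k, a, b * c] ⊗[k] ℍ[k, a * a, c] ≃ₐ[k] ℍ[k, a, b] ⊗[k] ℍ[k, a, c] :=
  AlgEquiv.ofSurjectiveOfFinrankEq _ (surjective_tensorHom b ha hc)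
    (by simp [Module.finrank_tensorProduct, finrank_eq_four])

end Tensor

end QuaternionAlgebra

theorem quaternion_tensor_quaternion_general
    (k : Type*) [Field k] (hchar : (2 : k) ≠ 0)
    (a b c : k) (ha : a ≠ 0) (hc : c ≠ 0) :
    Nonempty ((ℍ[k, a, b] ⊗[k] ℍ[k, a, c]) ≃ₐ[k]
      Matrix (Fin 2) (Fin 2) ℍ[k, a, b * c]) :=
  ⟨(QuaternionAlgebra.tensorEquiv b ha hc).symm.trans <|
    (Algebra.TensorProduct.congr AlgEquiv.refl
      (QuaternionAlgebra.equivMatrixOfSq hchar ha hc)).trans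
      (matrixEquivTensor (Fin 2) k ℍ[k, a, b * c]).symm⟩

/-- Brauer product formula on the level of quaternion algebras: over a field
of characteristic `≠ 2`, `ℍ[k, a, b] ⊗[k] ℍ[k, a, c] ≅ M₂(ℍ[k, a, bc])`. -/
theorem quaternion_tensor_quaternion
    (k : Type*) [Field k] (hchar : (2 : k) ≠ 0)
    (a b c : k) (ha : a ≠ 0) (hb : b ≠ 0) (hc : c ≠ 0) :
    Nonempty ((ℍ[k, a, b] ⊗[k] ℍ[k, a, c]) ≃ₐ[k]
      Matrix (Fin 2) (Fin 2) ℍ[k, a, b * c]) :=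
  quaternion_tensor_quaternion_general k hchar a b c ha hc
end

section
/- Let k be a field of characteristic different from 2 and let a, b ∈ k be nonzero. Then the equation x² − a·y² − b·z² = 0 has a solution (x, y, z) ∈ k³ with (x, y, z) ≠ (0, 0, 0) if and only if there is an isomorphism of k-algebras ℍ[k, a, b] ≅ Matrix (Fin 2) (Fin 2) k. -/
/-!
A point of the conic with `z ≠ 0` writes `b = p² - a r²` as a norm from `k(√a)`; a point with
`z = 0` makes `a` a square, and then every element is such a norm. Given `b = p² - a r²`, two
explicit matrices satisfy the relations of `ℍ[k, a, b]`, and the induced map to `M₂(k)` is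
injective, hence bijective by counting dimensions.

Conversely `M₂(k)` has a nonzero element of square zero. In `ℍ[k, a, b]` such an element is a pure
quaternion `x i + y j + z k` with `a x² + b y² - a b z² = 0`, which gives the point
`(a b z, b y, a x)` of the conic.
-/

open scoped Quaternion

section Field

variable {k : Type*} [Field k] {a : k}

/-- The witness comes from `b = ((b + 1) / 2)² - ((b - 1) / 2)²` and `a (y / x)² = 1`. -/
theorem exists_sq_sub_mul_sq_eq_of_sq_eq_mul_sq (h2 : (2 : k) ≠ 0) {x y : k} (hx : x ≠ 0)
    (hxy : x ^ 2 = a * y ^ 2) (b : k) : ∃ p r : k, p ^ 2 - a * r ^ 2 = b :=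
  ⟨(b + 1) / 2, (b - 1) * y / (2 * x), by
    field_simp
    linear_combination (b - 1) ^ 2 * hxy⟩

theorem exists_sq_sub_mul_sq_eq_of_conic_point (h2 : (2 : k) ≠ 0) (ha : a ≠ 0) {b x y z : k}
    (hne : (x, y, z) ≠ (0, 0, 0)) (h : x ^ 2 - a * y ^ 2 - b * z ^ 2 = 0) :
    ∃ p r : k, p ^ 2 - a * r ^ 2 = b := by
  rcases eq_or_ne z 0 with rfl | hz
  · have hx : x ≠ 0 := by
      rintro rfl
      have hy : y = 0 := by
        have : a * y ^ 2 = 0 := by linear_combination -h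
        simpa [ha] using this
      exact hne (by simp [hy])
    have hxy : x ^ 2 = a * y ^ 2 := by linear_combination h
    exact exists_sq_sub_mul_sq_eq_of_sq_eq_mul_sq h2 hx hxy b
  · exact ⟨x / z, y / z, by field_simp; linear_combination h⟩

end Field

namespace QuaternionAlgebra

section MatrixBasis

variable {R : Type*} [CommRing R] {a b p r : R}

/-- On `R[√a] = R ⊕ R √a`, `i` is multiplication by `√a` and `j` is conjugation followed by
multiplication by `p + r √a`. -/
def matrixBasis (h : p ^ 2 - a * r ^ 2 = b) : Basis (Matrix (Fin 2) (Fin 2) R) a 0 b where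
  i := !![0, a; 1, 0]
  j := !![p, -(a * r); r, -p]
  k := !![a * r, -(a * p); p, -(a * r)]
  i_mul_i := by ext i j; fin_cases i <;> fin_cases j <;> simp
  j_mul_j := by ext i j; fin_cases i <;> fin_cases j <;> simp [← h] <;> ring
  i_mul_j := by ext i j; fin_cases i <;> fin_cases j <;> simp
  j_mul_i := by ext i j; fin_cases i <;> fin_cases j <;> simp <;> ring

theorem matrixBasis_liftHom_apply (h : p ^ 2 - a * r ^ 2 = b) (q : ℍ[R,a,b]) :
    (matrixBasis h).liftHom q =
      !![q.re + p * q.imJ + a * r * q.imK, a * (q.imI - r * q.imJ - p * q.imK);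
        q.imI + r * q.imJ + p * q.imK, q.re - p * q.imJ - a * r * q.imK] := by
  ext i j
  fin_cases i <;> fin_cases j <;>
    simp [matrixBasis, Basis.lift, Matrix.algebraMap_matrix_apply] <;> ring

variable [NoZeroDivisors R]

theorem matrixBasis_liftHom_injective (h2 : (2 : R) ≠ 0) (ha : a ≠ 0) (hb : b ≠ 0)
    (h : p ^ 2 - a * r ^ 2 = b) : Function.Injective (matrixBasis h).liftHom := by
  rw [injective_iff_map_eq_zero]
  intro q hq
  rw [matrixBasis_liftHom_apply] at hq
  have e00 := congr_fun₂ hq 0 0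
  have e01 := congr_fun₂ hq 0 1
  have e10 := congr_fun₂ hq 1 0
  have e11 := congr_fun₂ hq 1 1
  simp only [Matrix.of_apply, Matrix.cons_val', Matrix.cons_val_zero, Matrix.cons_val_one,
    Matrix.empty_val', Matrix.cons_val_fin_one, Matrix.zero_apply] at e00 e01 e10 e11
  have h2a : 2 * a ≠ 0 := mul_ne_zero h2 ha
  have hre : q.re = 0 :=
    eq_zero_of_ne_zero_of_mul_left_eq_zero h2 (by linear_combination e00 + e11)
  have hI : q.imI = 0 :=
    eq_zero_of_ne_zero_of_mul_left_eq_zero h2a (by linear_combination e01 + a * e10)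
  -- a linear system in `(imJ, imK)` with determinant `p² - a r² = b`
  have hu : p * q.imJ + a * r * q.imK = 0 :=
    eq_zero_of_ne_zero_of_mul_left_eq_zero h2 (by linear_combination e00 - e11)
  have hv : r * q.imJ + p * q.imK = 0 :=
    eq_zero_of_ne_zero_of_mul_left_eq_zero h2a (by linear_combination a * e10 - e01)
  have hJ : q.imJ = 0 := eq_zero_of_ne_zero_of_mul_left_eq_zero hb
    (by linear_combination p * hu - a * r * hv - q.imJ * h)
  have hK : q.imK = 0 := eq_zero_of_ne_zero_of_mul_left_eq_zero hb
    (by linear_combination p * hv - r * hu - q.imK * h)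
  ext <;> assumption

end MatrixBasis

section SquareZero

variable {R : Type*} [CommRing R] [NoZeroDivisors R] {a b : R}

theorem re_eq_zero_of_mul_self_eq_zero (h2 : (2 : R) ≠ 0) {q : ℍ[R,a,b]} (hq : q * q = 0) :
    q.re = 0 := by
  by_contra hre
  have h2re : 2 * q.re ≠ 0 := mul_ne_zero h2 hre
  have hI : q.imI = 0 := by
    have h := congrArg imI hq
    simp only [imI_mul, imI_zero] at h
    exact eq_zero_of_ne_zero_of_mul_left_eq_zero h2re (by linear_combination h)
  have hJ : q.imJ = 0 := by
    have h := congrArg imJ hq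
    simp only [imJ_mul, imJ_zero] at h
    exact eq_zero_of_ne_zero_of_mul_left_eq_zero h2re (by linear_combination h)
  have hK : q.imK = 0 := by
    have h := congrArg imK hq
    simp only [imK_mul, imK_zero] at h
    exact eq_zero_of_ne_zero_of_mul_left_eq_zero h2re (by linear_combination h)
  have h := congrArg re hq
  simp only [re_mul, hI, hJ, hK, re_zero] at h
  exact hre (mul_self_eq_zero.mp (by linear_combination h))

theorem exists_conic_point_of_mul_self_eq_zero (h2 : (2 : R) ≠ 0) (ha : a ≠ 0) (hb : b ≠ 0)
    {q : ℍ[R,a,b]} (hq0 : q ≠ 0) (hq : q * q = 0) :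
    ∃ x y z : R, (x, y, z) ≠ (0, 0, 0) ∧ x ^ 2 - a * y ^ 2 - b * z ^ 2 = 0 := by
  have hre := re_eq_zero_of_mul_self_eq_zero h2 hq
  refine ⟨a * b * q.imK, b * q.imJ, a * q.imI, ?_, ?_⟩
  · contrapose! hq0
    simp only [Prod.mk.injEq, mul_eq_zero, ha, hb, or_self, false_or] at hq0
    ext <;> simp [hre, hq0]
  · have h := congrArg re hq
    simp only [re_mul, hre, re_zero] at h
    linear_combination (-(a * b)) * h

end SquareZero

end QuaternionAlgebra

theorem nonempty_algEquiv_matrix_of_sq_sub_mul_sq_eq {k : Type*} [Field k] {a b p r : k}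
    (h2 : (2 : k) ≠ 0) (ha : a ≠ 0) (hb : b ≠ 0) (h : p ^ 2 - a * r ^ 2 = b) :
    Nonempty (ℍ[k,a,b] ≃ₐ[k] Matrix (Fin 2) (Fin 2) k) := by
  have hinj := QuaternionAlgebra.matrixBasis_liftHom_injective h2 ha hb h
  have hrank : Module.finrank k ℍ[k,a,b] = Module.finrank k (Matrix (Fin 2) (Fin 2) k) := by
    simp [QuaternionAlgebra.finrank_eq_four, Module.finrank_matrix]
  exact ⟨.ofBijective _ ⟨hinj, (LinearMap.injective_iff_surjective_of_finrank_eq_finrank hrank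
    (f := (QuaternionAlgebra.matrixBasis h).liftHom.toLinearMap)).mp hinj⟩⟩

theorem Matrix.exists_ne_zero_mul_self_eq_zero {R : Type*} [Semiring R] [Nontrivial R] :
    ∃ M : Matrix (Fin 2) (Fin 2) R, M ≠ 0 ∧ M * M = 0 :=
  ⟨Matrix.single 0 1 1, by simp [← Matrix.ext_iff], by simp⟩

/-- A smooth conic `x² − a y² − b z² = 0` over a field `k` of characteristic
`≠ 2` has a nontrivial `k`-point iff the quaternion algebra `ℍ[k, a, b]` is
split, i.e. isomorphic to `M₂(k)`. -/
theorem conic_point_iff_quaternion_split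
    (k : Type*) [Field k] (hchar : (2 : k) ≠ 0)
    (a b : k) (ha : a ≠ 0) (hb : b ≠ 0) :
    (∃ x y z : k, (x, y, z) ≠ (0, 0, 0) ∧ x ^ 2 - a * y ^ 2 - b * z ^ 2 = 0) ↔
      Nonempty (ℍ[k, a, b] ≃ₐ[k] Matrix (Fin 2) (Fin 2) k) := by
  constructor
  · rintro ⟨x, y, z, hne, h⟩
    obtain ⟨p, r, hpr⟩ := exists_sq_sub_mul_sq_eq_of_conic_point hchar ha hne h
    exact nonempty_algEquiv_matrix_of_sq_sub_mul_sq_eq hchar ha hb hpr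
  · rintro ⟨f⟩
    obtain ⟨E, hE0, hE⟩ := Matrix.exists_ne_zero_mul_self_eq_zero (R := k)
    refine QuaternionAlgebra.exists_conic_point_of_mul_self_eq_zero hchar ha hb
      (q := f.symm E) (by simpa using hE0) ?_
    rw [← map_mul, hE, map_zero]
end

section
/- Let k be a field of characteristic different from 2 and let a, b, a', b' ∈ k be nonzero. Let R = k[X, Y]/(X² − a·Y² − b), which is an integral domain, and let K be its field of fractions (the function field of the conic C = (x² − a·y² − b·z² = 0)). Suppose the equation x² − a'·y² − b'·z² = 0 has a solution (x, y, z) ∈ K³ with (x, y, z) ≠ (0, 0, 0). Then either the equation x² − a'·y² − b'·z² = 0 has a solution (x, y, z) ∈ k³ with (x, y, z) ≠ (0, 0, 0), or there is an isomorphism of k-algebras ℍ[k, a, b] ≅ ℍ[k, a', b']. -/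
/-!
Suppose the conic form `φ = ⟨1, -a', -b'⟩` of `ℍ[k, a', b']` is anisotropic over `k`; then so is
its pure quaternion form `ψ = ⟨a', b', -a'b'⟩`, and both stay anisotropic over `k[Y]`. Clearing
denominators, `φ` has a nontrivial zero over `R = k[Y][X] / (X² - f)`, `f = aY² + b`, which is
free over `k[Y]` on `1, X`. Writing that zero as `v + X u` with `u, v ∈ k[Y]³` gives
`φ(v) + f φ(u) = 0` and `u ⊥ v`, so `φ(u) ≠ 0`, and the Lagrange identity for the cross product
gives `ψ(u × v) = f φ(u)²`. By the Cassels–Pfister descent `ψ` represents `f` itself over `k[Y]`.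
Comparing leading coefficients, the representing vector is `Y p + q` with `p, q ∈ k³`, `ψ(p) = a`,
`ψ(q) = b` and `p ⊥ q`: the pure quaternions `p, q ∈ ℍ[k, a', b']` satisfy the defining
relations of `ℍ[k, a, b]`.
-/

open scoped Quaternion

/-- The affine coordinate ring `k[X, Y] / (X² − a·Y² − b)` of the conic
`x² − a·y² − b·z² = 0`. -/
noncomputable abbrev ConicCoordRing (k : Type*) [Field k] (a b : k) : Type _ :=
  MvPolynomial (Fin 2) k ⧸
    Ideal.span {(MvPolynomial.X 0) ^ 2 - MvPolynomial.C a * (MvPolynomial.X 1) ^ 2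
      - MvPolynomial.C b}

open Polynomial QuadraticMap

theorem QuadraticMap.map_smul_add_smul {R M : Type*} [CommRing R] [AddCommGroup M] [Module R M]
    (Q : QuadraticMap R M R) (r s : R) (x y : M) :
    Q (r • x + s • y) = r ^ 2 * Q x + r * s * polar Q x y + s ^ 2 * Q y := by
  have h : polar Q (r • x) (s • y) = r * s * polar Q x y := by
    rw [polar_smul_left, polar_smul_right, smul_eq_mul, smul_eq_mul]
    ring
  rw [polar, Q.map_smul, Q.map_smul, smul_eq_mul, smul_eq_mul] at h
  linear_combination h

section AlgHom

variable {k R S ι : Type*} [CommSemiring k] [CommRing R] [CommRing S] [Algebra k R] [Algebra k S]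
  [Fintype ι]

theorem AlgHom.map_weightedSumSquares (f : R →ₐ[k] S) (w : ι → k) (v : ι → R) :
    f (weightedSumSquares R w v) = weightedSumSquares S w (f ∘ v) := by
  simp [map_sum]

theorem AlgHom.map_polar_weightedSumSquares (f : R →ₐ[k] S) (w : ι → k) (x y : ι → R) :
    f (polar (weightedSumSquares R w) x y) = polar (weightedSumSquares S w) (f ∘ x) (f ∘ y) := by
  simp only [polar, map_sub, f.map_weightedSumSquares]
  congr 3
  ext1 i
  exact map_add f (x i) (y i)

end AlgHom

theorem IsFractionRing.exists_ne_zero_weightedSumSquares_eq_zero {k R K ι : Type*}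
    [CommSemiring k] [CommRing R] [CommRing K] [Algebra k R] [Algebra k K] [Algebra R K]
    [IsScalarTower k R K] [IsFractionRing R K] [Fintype ι] {w : ι → k} {v : ι → K} (hv : v ≠ 0)
    (h : weightedSumSquares K w v = 0) : ∃ r : ι → R, r ≠ 0 ∧ weightedSumSquares R w r = 0 := by
  obtain ⟨s, hs⟩ := IsLocalization.exist_integer_multiples (nonZeroDivisors R) Finset.univ v
  choose r hr using fun i => hs i (Finset.mem_univ i)
  let φ := IsScalarTower.toAlgHom k R K
  have hrv : φ ∘ r = algebraMap R K s • v := by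
    ext1 i
    simp [φ, hr i, Algebra.smul_def]
  have hunit : IsUnit (algebraMap R K s) := IsLocalization.map_units K s
  refine ⟨r, fun hr0 => hv ?_, IsFractionRing.injective R K ?_⟩
  · refine hunit.smul_eq_zero.1 (hrv ▸ ?_)
    ext1 i
    simp [hr0]
  · rw [map_zero, ← IsScalarTower.coe_toAlgHom' k, φ.map_weightedSumSquares, hrv,
      QuadraticMap.map_smul, h, smul_zero]

namespace Polynomial

variable {k ι : Type*} [Field k] [Fintype ι] {w : ι → k}

theorem natDegree_weightedSumSquares_le {v : ι → k[X]} {m : ℕ} (hv : ∀ i, (v i).natDegree ≤ m) :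
    (weightedSumSquares k[X] w v).natDegree ≤ 2 * m := by
  rw [weightedSumSquares_apply]
  refine natDegree_sum_le_of_forall_le _ _ fun i _ => ?_
  rw [smul_eq_C_mul, two_mul]
  exact (natDegree_C_mul_le _ _).trans (natDegree_mul_le_of_le (hv i) (hv i))

theorem coeff_weightedSumSquares_two_mul {v : ι → k[X]} {m : ℕ} (hv : ∀ i, (v i).natDegree ≤ m) :
    (weightedSumSquares k[X] w v).coeff (2 * m) =
      weightedSumSquares k w (fun i => (v i).coeff m) := by
  simp only [weightedSumSquares_apply, finsetSum_coeff, coeff_smul, two_mul,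
    coeff_mul_add_eq_of_natDegree_le (hv _) (hv _)]

variable (hw : (weightedSumSquares k w).Anisotropic)
include hw

theorem natDegree_le_of_natDegree_weightedSumSquares_le {v : ι → k[X]} {n : ℕ}
    (hv : (weightedSumSquares k[X] w v).natDegree ≤ 2 * n) (i : ι) : (v i).natDegree ≤ n := by
  suffices ∀ m, (∀ i, (v i).natDegree ≤ n + m) → ∀ i, (v i).natDegree ≤ n from
    this _ (fun i => (Finset.le_sup (f := fun i => (v i).natDegree) (Finset.mem_univ i)).trans
      (Nat.le_add_left _ n)) i
  intro m
  induction m with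
  | zero => exact id
  | succ m ih =>
    intro hm
    have hlead : (fun i => (v i).coeff (n + (m + 1))) = 0 := by
      refine hw _ ?_
      rw [← coeff_weightedSumSquares_two_mul hm]
      exact coeff_eq_zero_of_natDegree_lt (by omega)
    exact ih fun i => natDegree_le_pred (hm i) (congrFun hlead i)

theorem anisotropic_weightedSumSquares : (weightedSumSquares k[X] w).Anisotropic := by
  intro v hv
  have hdeg (i : ι) : (v i).natDegree ≤ 0 :=
    natDegree_le_of_natDegree_weightedSumSquares_le hw (by simp [hv]) i
  have hconst : (fun i => (v i).coeff 0) = 0 := by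
    refine hw _ ?_
    rw [← coeff_weightedSumSquares_two_mul hdeg]
    simp [hv]
  funext i
  rw [eq_C_of_natDegree_le_zero (hdeg i), congrFun hconst i]
  simp

theorem exists_weightedSumSquares_eq_mul_sq_natDegree_lt {p d : k[X]} {v : ι → k[X]}
    (hd : 0 < d.natDegree) (h : weightedSumSquares k[X] w v = p * d ^ 2) :
    ∃ e v', e ≠ 0 ∧ e.natDegree < d.natDegree ∧ weightedSumSquares k[X] w v' = p * e ^ 2 := by
  set Q := weightedSumSquares k[X] w
  have hd0 : d ≠ 0 := ne_zero_of_natDegree_gt hd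
  set W := fun i => v i / d
  set r := fun i => v i % d
  have hv : v = r + d • W := _root_.funext fun i => (EuclideanDomain.mod_add_div (v i) d).symm
  by_cases hr : r = 0
  · refine ⟨1, W, one_ne_zero, by simpa using hd, ?_⟩
    rw [hv, hr, zero_add, Q.map_smul, smul_eq_mul] at h
    exact mul_left_cancel₀ (pow_ne_zero 2 hd0) (by linear_combination h)
  set B := polar Q v W
  set e := p * d - B + d * Q W
  have hQr : Q r = d * e := by
    rw [show r = (1 : k[X]) • v + (-d) • W by rw [hv]; simp, Q.map_smul_add_smul, h]
    ring
  have he : e ≠ 0 :=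
    right_ne_zero_of_mul (hQr ▸ fun h0 => hr (anisotropic_weightedSumSquares hw r h0))
  -- `e / d` times the reflection of `v` in `r = v - d W`, so its value is `(e / d)² p d²`
  refine ⟨e, (Q W - p) • v + (2 * p * d - B) • W, he, ?_, ?_⟩
  · have hr_deg (i : ι) : (r i).natDegree ≤ d.natDegree - 1 :=
      Nat.le_sub_one_of_lt (natDegree_mod_lt _ hd.ne')
    have := natDegree_weightedSumSquares_le (w := w) hr_deg
    rw [hQr, natDegree_mul hd0 he] at this
    omega
  · rw [Q.map_smul_add_smul, h]
    ring

theorem exists_weightedSumSquares_eq_of_eq_mul_sq {p d : k[X]} {v : ι → k[X]} (hd : d ≠ 0)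
    (h : weightedSumSquares k[X] w v = p * d ^ 2) : ∃ v', weightedSumSquares k[X] w v' = p := by
  induction hn : d.natDegree using Nat.strong_induction_on generalizing d v with
  | _ n ih =>
    rcases n.eq_zero_or_pos with rfl | hpos
    · obtain ⟨c, rfl⟩ : ∃ c, d = C c := ⟨_, eq_C_of_natDegree_eq_zero hn⟩
      have hc : C c⁻¹ * C c = 1 := by
        rw [← C_mul, inv_mul_cancel₀ (by simpa using hd), C_1]
      refine ⟨C c⁻¹ • v, ?_⟩
      rw [QuadraticMap.map_smul, h, smul_eq_mul]
      linear_combination (C c⁻¹ * C c + 1) * p * hc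
    · obtain ⟨e, v', he, hlt, h'⟩ :=
        exists_weightedSumSquares_eq_mul_sq_natDegree_lt hw (hn ▸ hpos) h
      exact ih _ (hn ▸ hlt) he h' rfl

theorem exists_weightedSumSquares_eq_of_eq_quadratic {v : ι → k[X]} {a b : k}
    (h : weightedSumSquares k[X] w v = C a * X ^ 2 + C b) :
    ∃ x y : ι → k, weightedSumSquares k w x = a ∧ polar (weightedSumSquares k w) x y = 0 ∧
      weightedSumSquares k w y = b := by
  have hdeg : (weightedSumSquares k[X] w v).natDegree ≤ 2 * 1 := by
    rw [h]; compute_degree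
  set x : ι → k := fun i => (v i).coeff 1
  set y : ι → k := fun i => (v i).coeff 0
  let φ := Algebra.ofId k k[X]
  have hv : v = (X : k[X]) • (φ ∘ x) + (1 : k[X]) • (φ ∘ y) := _root_.funext fun i => by
    simp only [Pi.add_apply, Pi.smul_apply, smul_eq_mul, one_mul, Function.comp_apply, φ,
      Algebra.ofId_apply, algebraMap_eq]
    rw [mul_comm]
    exact eq_X_add_C_of_natDegree_le_one (natDegree_le_of_natDegree_weightedSumSquares_le hw hdeg i)
  rw [hv, QuadraticMap.map_smul_add_smul, ← φ.map_weightedSumSquares, ← φ.map_weightedSumSquares,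
    ← φ.map_polar_weightedSumSquares] at h
  refine ⟨x, y, ?_⟩
  generalize weightedSumSquares k w x = q₂, polar (weightedSumSquares k w) x y = q₁,
    weightedSumSquares k w y = q₀ at h
  refine ⟨?_, ?_, ?_⟩
  · simpa [φ] using congrArg (coeff · 2) h
  · simpa [φ] using congrArg (coeff · 1) h
  · simpa [φ] using congrArg (coeff · 0) h

end Polynomial

namespace AdjoinRoot

variable {A : Type*} [CommRing A] {g : A[X]}

theorem exists_eq_of_add_of_mul_root (hg : g.Monic) (h2 : g.natDegree = 2) (z : AdjoinRoot g) :
    ∃ x₀ x₁ : A, z = of g x₀ + of g x₁ * root g := by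
  obtain ⟨p, rfl⟩ := mk_surjective z
  have hdeg : (p %ₘ g).natDegree ≤ 1 := by
    have := natDegree_modByMonic_lt p hg (by rintro rfl; simp at h2)
    omega
  obtain ⟨x₁, x₀, hr⟩ : ∃ x₁ x₀, p %ₘ g = C x₁ * X + C x₀ :=
    ⟨_, _, eq_X_add_C_of_natDegree_le_one hdeg⟩
  refine ⟨x₀, x₁, ?_⟩
  rw [← mk_leftInverse hg (mk g p), modByMonicHom_mk, hr, map_add, map_mul, mk_C, mk_C, mk_X]
  ring

theorem eq_zero_of_of_add_of_mul_root_eq_zero (hg : g.Monic) (h2 : g.natDegree = 2) {x₀ x₁ : A}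
    (h : of g x₀ + of g x₁ * root g = 0) : x₀ = 0 ∧ x₁ = 0 := by
  nontriviality A
  have hdvd : g ∣ C x₁ * X + C x₀ := by
    rw [← mk_eq_zero, map_add, map_mul, mk_C, mk_C, mk_X, ← h]
    ring
  have hlt : (C x₁ * X + C x₀).degree < g.degree :=
    degree_linear_le.trans_lt (by rw [degree_eq_natDegree hg.ne_zero, h2]; norm_num)
  have h0 : C x₁ * X + C x₀ = 0 :=
    ((modByMonic_eq_self_iff hg).2 hlt).symm.trans ((modByMonic_eq_zero_iff_dvd hg).2 hdvd)
  exact ⟨by simpa using congrArg (coeff · 0) h0, by simpa using congrArg (coeff · 1) h0⟩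

theorem exists_weightedSumSquares_add_mul_eq_zero {k ι : Type*} [CommSemiring k] [Nontrivial A]
    [Algebra k A] [Fintype ι] {w : ι → k} {f : A} {z : ι → AdjoinRoot (X ^ 2 - C f)} (hz : z ≠ 0)
    (h : weightedSumSquares _ w z = 0) :
    ∃ u v : ι → A, (u, v) ≠ 0 ∧ weightedSumSquares A w v + f * weightedSumSquares A w u = 0 ∧
      polar (weightedSumSquares A w) u v = 0 := by
  have hg : (X ^ 2 - C f).Monic := monic_X_pow_sub_C f two_ne_zero
  have h2 : (X ^ 2 - C f).natDegree = 2 := natDegree_X_pow_sub_C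
  have hroot : root (X ^ 2 - C f) ^ 2 = of _ f := by
    have := eval₂_root (X ^ 2 - C f)
    rwa [eval₂_sub, eval₂_X_pow, eval₂_C, sub_eq_zero] at this
  choose v u hz' using fun i => exists_eq_of_add_of_mul_root hg h2 (z i)
  let φ := IsScalarTower.toAlgHom k A (AdjoinRoot (X ^ 2 - C f))
  have hφ : ⇑φ = of _ := by ext1; simp [φ, algebraMap_eq]
  have hzvu : z = (1 : AdjoinRoot (X ^ 2 - C f)) • (φ ∘ v) + root (X ^ 2 - C f) • (φ ∘ u) := by
    ext1 i
    simp [hφ, hz' i, mul_comm]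
  refine ⟨u, v, ?_, ?_⟩
  · rintro huv
    simp only [Prod.mk_eq_zero] at huv
    exact hz (by simp [hzvu, huv.1, huv.2])
  rw [hzvu, QuadraticMap.map_smul_add_smul, ← φ.map_weightedSumSquares,
    ← φ.map_weightedSumSquares, ← φ.map_polar_weightedSumSquares, hroot, hφ] at h
  have := eq_zero_of_of_add_of_mul_root_eq_zero hg h2
    (x₀ := weightedSumSquares A w v + f * weightedSumSquares A w u)
    (x₁ := polar (weightedSumSquares A w) v u) (by rw [← h, map_add, map_mul]; ring)
  exact ⟨this.1, by rw [polar_comm]; exact this.2⟩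

end AdjoinRoot

section Forms

variable {k : Type*} [CommRing k]

abbrev conicForm (S : Type*) [CommRing S] [Algebra k S] (a b : k) :
    QuadraticMap S (Fin 3 → S) S :=
  weightedSumSquares S ![1, -a, -b]

/-- `x ↦ x * x` on the pure quaternions `x = x₀ i + x₁ j + x₂ k` of `ℍ[k, a, b]`. -/
abbrev pureForm (S : Type*) [CommRing S] [Algebra k S] (a b : k) :
    QuadraticMap S (Fin 3 → S) S :=
  weightedSumSquares S ![a, b, -(a * b)]

variable {S : Type*} [CommRing S] [Algebra k S]

theorem conicForm_apply (a b : k) (v : Fin 3 → S) :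
    conicForm S a b v = v 0 ^ 2 - a • v 1 ^ 2 - b • v 2 ^ 2 := by
  simp [Fin.sum_univ_three, pow_two, sub_eq_add_neg]

theorem pureForm_apply (a b : k) (v : Fin 3 → S) :
    pureForm S a b v = a • v 0 ^ 2 + b • v 1 ^ 2 - (a * b) • v 2 ^ 2 := by
  simp [Fin.sum_univ_three, pow_two, sub_eq_add_neg]

theorem pureForm_cross_of_polar_eq_zero [NoZeroDivisors S] (h2 : (2 : S) ≠ 0) (a b : k)
    {u v : Fin 3 → S} (h : polar (conicForm S a b) u v = 0) :
    pureForm S a b ![u 0 * v 1 - u 1 * v 0, u 0 * v 2 - u 2 * v 0, u 1 * v 2 - u 2 * v 1] =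
      -(conicForm S a b u * conicForm S a b v) := by
  have lagrange : 4 * pureForm S a b
      ![u 0 * v 1 - u 1 * v 0, u 0 * v 2 - u 2 * v 0, u 1 * v 2 - u 2 * v 1] =
      polar (conicForm S a b) u v ^ 2 - 4 * conicForm S a b u * conicForm S a b v := by
    simp only [polar, conicForm_apply, pureForm_apply, Algebra.smul_def, Pi.add_apply,
      Matrix.cons_val_zero, Matrix.cons_val_one, Matrix.cons_val, map_mul]
    ring
  refine mul_left_cancel₀ (show (4 : S) ≠ 0 from ?_) (by rw [lagrange, h]; ring)
  simpa [show (4 : S) = 2 * 2 by norm_num] using h2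

end Forms

section Anisotropic

variable {k : Type*} [Field k] {a b : k}

theorem anisotropic_conicForm
    (h : ¬∃ x y z : k, (x, y, z) ≠ (0, 0, 0) ∧ x ^ 2 - a * y ^ 2 - b * z ^ 2 = 0) :
    (conicForm k a b).Anisotropic := fun v hv => by
  by_contra hne
  rw [conicForm_apply] at hv
  exact h ⟨v 0, v 1, v 2, by simpa [funext_iff, Fin.forall_fin_succ] using hne, by simpa using hv⟩

theorem anisotropic_pureForm (ha : a ≠ 0) (h : (conicForm k a b).Anisotropic) :
    (pureForm k a b).Anisotropic := by
  intro v hv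
  rw [pureForm_apply] at hv
  simp only [smul_eq_mul] at hv
  -- `φ(a x z, x y, y² - a z²) = -(y² - a z²) ψ(x, y, z)`
  have h₁ := congrFun (h ![a * v 0 * v 2, v 0 * v 1, v 1 ^ 2 - a * v 2 ^ 2] (by
    simp only [conicForm_apply, Matrix.cons_val, smul_eq_mul]
    linear_combination (-(v 1 ^ 2 - a * v 2 ^ 2)) * hv)) 2
  simp only [Matrix.cons_val, Pi.zero_apply] at h₁
  have h₂ := h ![v 1, v 2, 0] (by
    simp only [conicForm_apply, Matrix.cons_val, smul_eq_mul]
    linear_combination h₁)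
  have h₃ : v 1 = 0 := by simpa using congrFun h₂ 0
  have h₄ : v 2 = 0 := by simpa using congrFun h₂ 1
  have h₅ : v 0 = 0 := by simpa [h₃, h₄, ha] using hv
  ext i
  fin_cases i <;> assumption

theorem exists_pureForm_eq_of_conicForm_add_mul_eq_zero (hchar : (2 : k) ≠ 0) (ha : a ≠ 0)
    (hφ : (conicForm k a b).Anisotropic) {f : k[X]} {u v : Fin 3 → k[X]} (huv : (u, v) ≠ 0)
    (hsum : conicForm k[X] a b v + f * conicForm k[X] a b u = 0)
    (hpolar : polar (conicForm k[X] a b) u v = 0) : ∃ α, pureForm k[X] a b α = f := by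
  have h2 : (2 : k[X]) ≠ 0 := fun h => hchar (by simpa using congrArg (coeff · 0) h)
  have hu : conicForm k[X] a b u ≠ 0 := fun h0 => by
    have hu0 := anisotropic_weightedSumSquares hφ u h0
    rw [h0, mul_zero, add_zero] at hsum
    exact huv (by simp [hu0, anisotropic_weightedSumSquares hφ v hsum])
  refine exists_weightedSumSquares_eq_of_eq_mul_sq (anisotropic_pureForm ha hφ)
    (v := ![u 0 * v 1 - u 1 * v 0, u 0 * v 2 - u 2 * v 0, u 1 * v 2 - u 2 * v 1]) hu ?_
  rw [pureForm_cross_of_polar_eq_zero h2 a b hpolar]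
  linear_combination -conicForm k[X] a b u * hsum

end Anisotropic

namespace QuaternionAlgebra

variable {k : Type*} [Field k] {a b a' b' : k}

theorem eq_zero_of_forall_re_mul_eq_zero (ha : a ≠ 0) (hb : b ≠ 0) {x : ℍ[k,a,b]}
    (h : ∀ y : ℍ[k,a,b], (x * y).re = 0) : x = 0 := by
  have h₁ := h ⟨1, 0, 0, 0⟩
  have hi := h ⟨0, 1, 0, 0⟩
  have hj := h ⟨0, 0, 1, 0⟩
  have hk := h ⟨0, 0, 0, 1⟩
  simp only [re_mul, mul_one, mul_zero, add_zero, zero_mul, sub_zero, zero_add, mul_eq_zero,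
    zero_sub, neg_eq_zero] at h₁ hi hj hk
  ext <;> simp_all

theorem bijective_of_re_map_eq {f : ℍ[k,a,b] →ₐ[k] ℍ[k,a',b']} (ha : a ≠ 0) (hb : b ≠ 0)
    (hf : ∀ x, (f x).re = x.re) : Function.Bijective f := by
  have hinj : Function.Injective f := by
    refine (injective_iff_map_eq_zero f).2 fun x hx =>
      eq_zero_of_forall_re_mul_eq_zero ha hb fun y => ?_
    rw [← hf, map_mul, hx, zero_mul, re_zero]
  exact ⟨hinj, (LinearMap.injective_iff_surjective_of_finrank_eq_finrank (f := f.toLinearMap)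
    (by rw [finrank_eq_four, finrank_eq_four])).1 hinj⟩

theorem nonempty_algEquiv_of_re_eq_zero (ha : a ≠ 0) (hb : b ≠ 0) {p q : ℍ[k,a',b']}
    (hp : p.re = 0) (hq : q.re = 0) (hpp : p * p = algebraMap k _ a)
    (hqq : q * q = algebraMap k _ b) (hpq : (p * q).re = 0) :
    Nonempty (ℍ[k,a,b] ≃ₐ[k] ℍ[k,a',b']) := by
  have hqp : q * p = -(p * q) := by
    rw [QuaternionAlgebra.ext_iff]
    simp only [re_mul, hp, hq, mul_zero, zero_add, zero_mul, add_zero, re_neg, neg_sub, imI_mul,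
      zero_sub, imI_neg, neg_add_rev, neg_neg, imJ_mul, imJ_neg, imK_mul, imK_neg] at hpq ⊢
    exact ⟨by linear_combination 2 * hpq, by ring, by ring, by ring⟩
  let e : Basis ℍ[k,a',b'] a 0 b :=
    { i := p, j := q, k := p * q
      i_mul_i := by rw [hpp, Algebra.algebraMap_eq_smul_one, zero_smul, add_zero]
      j_mul_j := by rw [hqq, Algebra.algebraMap_eq_smul_one]
      i_mul_j := rfl
      j_mul_i := by rw [hqp, zero_smul, zero_sub] }
  refine ⟨AlgEquiv.ofBijective e.liftHom (bijective_of_re_map_eq ha hb fun x => ?_)⟩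
  simp [e, Basis.lift, hp, hq, hpq]

theorem mk_zero_mul_self (u : Fin 3 → k) :
    (⟨0, u 0, u 1, u 2⟩ * ⟨0, u 0, u 1, u 2⟩ : ℍ[k,a,b]) = algebraMap k _ (pureForm k a b u) := by
  rw [pureForm_apply, Algebra.algebraMap_eq_smul_one]
  ext <;> simp only [mk_mul_mk, mul_zero, zero_add, zero_mul, add_zero, zero_sub, smul_eq_mul,
    re_smul, re_one, imI_smul, imI_one, imJ_smul, imJ_one, imK_smul, imK_one, mul_one] <;> ring

theorem two_mul_re_mk_zero_mul (u v : Fin 3 → k) :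
    2 * (⟨0, u 0, u 1, u 2⟩ * ⟨0, v 0, v 1, v 2⟩ : ℍ[k,a,b]).re = polar (pureForm k a b) u v := by
  simp only [polar, pureForm_apply, mk_mul_mk, mul_zero, zero_add, zero_mul, add_zero, zero_sub,
    Pi.add_apply, smul_eq_mul]
  ring

theorem nonempty_algEquiv_of_pureForm (hchar : (2 : k) ≠ 0) (ha : a ≠ 0) (hb : b ≠ 0)
    {u v : Fin 3 → k} (hu : pureForm k a' b' u = a) (huv : polar (pureForm k a' b') u v = 0)
    (hv : pureForm k a' b' v = b) : Nonempty (ℍ[k,a,b] ≃ₐ[k] ℍ[k,a',b']) :=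
  nonempty_algEquiv_of_re_eq_zero ha hb rfl rfl (hu ▸ mk_zero_mul_self u) (hv ▸ mk_zero_mul_self v)
    (by simpa [hchar, huv] using two_mul_re_mk_zero_mul (a := a') (b := b') u v)

end QuaternionAlgebra

noncomputable def MvPolynomial.finTwoAlgEquiv (k : Type*) [CommRing k] :
    MvPolynomial (Fin 2) k ≃ₐ[k] k[X][X] :=
  (finSuccEquiv k 1).trans (Polynomial.mapAlgEquiv (uniqueAlgEquiv k (Fin 1)))

theorem MvPolynomial.finTwoAlgEquiv_X_zero (k : Type*) [CommRing k] :
    finTwoAlgEquiv k (X 0) = .X := by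
  simp [finTwoAlgEquiv, finSuccEquiv_X_zero]

theorem MvPolynomial.finTwoAlgEquiv_X_one (k : Type*) [CommRing k] :
    finTwoAlgEquiv k (X 1) = .C .X := by
  rw [finTwoAlgEquiv, AlgEquiv.trans_apply, ← Fin.succ_zero_eq_one, finSuccEquiv_X_succ]
  simp

theorem MvPolynomial.finTwoAlgEquiv_C (k : Type*) [CommRing k] (c : k) :
    finTwoAlgEquiv k (C c) = .C (.C c) :=
  (finTwoAlgEquiv k).commutes c

noncomputable def conicCoordRingEquiv (k : Type*) [Field k] (a b : k) :
    ConicCoordRing k a b ≃ₐ[k] AdjoinRoot (X ^ 2 - C (C a * X ^ 2 + C b) : k[X][X]) :=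
  Ideal.quotientEquivAlg _ _ (MvPolynomial.finTwoAlgEquiv k) (by
    rw [Ideal.map_span, Set.image_singleton]
    simp only [map_sub, map_mul, map_pow, RingHom.coe_coe, MvPolynomial.finTwoAlgEquiv_X_zero,
      MvPolynomial.finTwoAlgEquiv_X_one, MvPolynomial.finTwoAlgEquiv_C, map_add, sub_sub])

theorem ConicCoordRing.exists_weightedSumSquares_add_mul_eq_zero {k ι : Type*} [Field k]
    [Fintype ι] {a b : k} {w : ι → k} {z : ι → FractionRing (ConicCoordRing k a b)} (hz : z ≠ 0)
    (h : weightedSumSquares _ w z = 0) :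
    ∃ u v : ι → k[X], (u, v) ≠ 0 ∧
      weightedSumSquares k[X] w v + (C a * X ^ 2 + C b) * weightedSumSquares k[X] w u = 0 ∧
      polar (weightedSumSquares k[X] w) u v = 0 := by
  obtain ⟨r, hr, hr0⟩ :=
    IsFractionRing.exists_ne_zero_weightedSumSquares_eq_zero (R := ConicCoordRing k a b) hz h
  refine AdjoinRoot.exists_weightedSumSquares_add_mul_eq_zero (k := k)
    (z := conicCoordRingEquiv k a b ∘ r) (by simpa [funext_iff] using hr) ?_
  rw [← AlgEquiv.coe_toAlgHom, ← AlgHom.map_weightedSumSquares, hr0, map_zero]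

theorem amitsur_lemma_conics_general
    (k : Type*) [Field k] (hchar : (2 : k) ≠ 0)
    (a b a' b' : k) (ha : a ≠ 0) (hb : b ≠ 0) (ha' : a' ≠ 0)
    (h : ∃ x y z : FractionRing (ConicCoordRing k a b), (x, y, z) ≠ (0, 0, 0) ∧
      x ^ 2
        - algebraMap (ConicCoordRing k a b) _ (algebraMap k _ a') * y ^ 2
        - algebraMap (ConicCoordRing k a b) _ (algebraMap k _ b') * z ^ 2 = 0) :
    (∃ x y z : k, (x, y, z) ≠ (0, 0, 0) ∧ x ^ 2 - a' * y ^ 2 - b' * z ^ 2 = 0) ∨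
      Nonempty (ℍ[k, a, b] ≃ₐ[k] ℍ[k, a', b']) := by
  refine or_iff_not_imp_left.2 fun hk => ?_
  have hφ := anisotropic_conicForm hk
  obtain ⟨x, y, z, hne, hxyz⟩ := h
  obtain ⟨u, v, huv, hsum, hpolar⟩ := ConicCoordRing.exists_weightedSumSquares_add_mul_eq_zero
    (w := ![1, -a', -b']) (z := ![x, y, z]) (by simpa [funext_iff, Fin.forall_fin_succ] using hne)
    (by
      change conicForm _ a' b' _ = 0
      rw [conicForm_apply]
      simpa [Algebra.smul_def, ← IsScalarTower.algebraMap_apply] using hxyz)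
  obtain ⟨α, hα⟩ := exists_pureForm_eq_of_conicForm_add_mul_eq_zero hchar ha' hφ huv hsum hpolar
  obtain ⟨p, q, hp, hpq, hq⟩ :=
    exists_weightedSumSquares_eq_of_eq_quadratic (anisotropic_pureForm ha' hφ) hα
  exact QuaternionAlgebra.nonempty_algEquiv_of_pureForm hchar ha hb hp hpq hq

/-- Amitsur's lemma for conics: if the conic `x² − a'y² − b'z² = 0` has a
nontrivial point over the function field `K = Frac(k[X, Y]/(X² − aY² − b))` of
the conic `x² − ay² − bz² = 0`, then either it already has a nontrivial
`k`-point, or the two quaternion algebras `ℍ[k, a, b]` and `ℍ[k, a', b']` are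
isomorphic (i.e. the two conics are `k`-isomorphic). -/
theorem amitsur_lemma_conics
    (k : Type*) [Field k] (hchar : (2 : k) ≠ 0)
    (a b a' b' : k) (ha : a ≠ 0) (hb : b ≠ 0) (ha' : a' ≠ 0) (hb' : b' ≠ 0)
    [IsDomain (ConicCoordRing k a b)]
    (h : ∃ x y z : FractionRing (ConicCoordRing k a b), (x, y, z) ≠ (0, 0, 0) ∧
      x ^ 2
        - algebraMap (ConicCoordRing k a b) _ (algebraMap k _ a') * y ^ 2
        - algebraMap (ConicCoordRing k a b) _ (algebraMap k _ b') * z ^ 2 = 0) :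
    (∃ x y z : k, (x, y, z) ≠ (0, 0, 0) ∧ x ^ 2 - a' * y ^ 2 - b' * z ^ 2 = 0) ∨
      Nonempty (ℍ[k, a, b] ≃ₐ[k] ℍ[k, a', b']) :=
  amitsur_lemma_conics_general k hchar a b a' b' ha hb ha' h
end
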